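/- arXiv:2603.28087 — 8 statements merged into one kernel-verified Lean document; each statement's English description precedes it below -/
import Mathlib

section
/- For each nonzero element k of a commutative integral domain R, define σₖ⁰ = {s ∈ R \ {0} : ⟨k⟩ + ⟨s⟩ = R}. Then the collection {σₖ⁰ : k ∈ R \ {0}} forms a basis for a topology on R \ {0}. -/
/-- For nonzero `k`, the basic set `σₖ⁰ = {s ≠ 0 : ⟨k⟩ + ⟨s⟩ = R}` of the Macías topology. -/
def sigma0 (R : Type*) [CommRing R] (k : R) : Set {x : R // x ≠ 0} :=
  {s | Ideal.span {k} + Ideal.span {s.1} = ⊤}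

/-- The Macías topology on `R \ {0}`, generated by the sets `σₖ⁰` for `k ≠ 0`. -/
def maciasTop (R : Type*) [CommRing R] : TopologicalSpace {x : R // x ≠ 0} :=
  TopologicalSpace.generateFrom {U | ∃ k : R, k ≠ 0 ∧ U = sigma0 R k}

lemma mem_sigma0_iff {R : Type*} [CommRing R] (k : R) (s : {x : R // x ≠ 0}) :
    s ∈ sigma0 R k ↔ IsCoprime k s.1 := by
  rw [← Ideal.isCoprime_span_singleton_iff]
  simp [sigma0, Ideal.isCoprime_iff_sup_eq, Ideal.add_eq_sup, Set.mem_setOf_eq]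

theorem stmt0 (R : Type*) [CommRing R] [IsDomain R] :
    (⋃₀ {U | ∃ k : R, k ≠ 0 ∧ U = sigma0 R k} = (Set.univ : Set {x : R // x ≠ 0})) ∧
    (∀ U₁ ∈ {U | ∃ k : R, k ≠ 0 ∧ U = sigma0 R k},
      ∀ U₂ ∈ {U | ∃ k : R, k ≠ 0 ∧ U = sigma0 R k},
        ∀ x ∈ U₁ ∩ U₂, ∃ U₃ ∈ {U | ∃ k : R, k ≠ 0 ∧ U = sigma0 R k},
          x ∈ U₃ ∧ U₃ ⊆ U₁ ∩ U₂) := by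
  constructor
  · apply Set.eq_univ_of_forall
    intro x
    exact ⟨sigma0 R 1, ⟨1, one_ne_zero, rfl⟩, (mem_sigma0_iff 1 x).2 (isCoprime_one_left)⟩
  · rintro U₁ ⟨k₁, hk₁, rfl⟩ U₂ ⟨k₂, hk₂, rfl⟩ x ⟨hx₁, hx₂⟩
    rw [mem_sigma0_iff] at hx₁ hx₂
    refine ⟨sigma0 R (k₁ * k₂), ⟨k₁ * k₂, mul_ne_zero hk₁ hk₂, rfl⟩,
      (mem_sigma0_iff _ x).2 (hx₁.mul_left hx₂), fun s hs => ?_⟩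
    rw [mem_sigma0_iff] at hs
    exact ⟨(mem_sigma0_iff _ s).2 hs.of_mul_left_left,
      (mem_sigma0_iff _ s).2 hs.of_mul_left_right⟩
end

section
/- Let R be an integral domain equipped with the Macías topology on R \ {0} (generated by the sets σₖ⁰ = {s ≠ 0 : ⟨k⟩ + ⟨s⟩ = R}). An element x ∈ R \ {0} is a unit if and only if the closure of {x} equals R \ {0}. -/
lemma unit_mem_open (R : Type*) [CommRing R] (x : {x : R // x ≠ 0})
    (hx : IsUnit x.1) {o : Set {x : R // x ≠ 0}}
    (ho : TopologicalSpace.GenerateOpen {U | ∃ k : R, k ≠ 0 ∧ U = sigma0 R k} o) :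
    ∀ y, y ∈ o → x ∈ o := by
  induction ho with
  | basic U hU =>
      obtain ⟨k, _, rfl⟩ := hU
      intro y _
      simp [sigma0, Ideal.span_singleton_eq_top.mpr hx]
  | univ => intro y _; trivial
  | inter s t _ _ ihs iht => intro y hy; exact ⟨ihs y hy.1, iht y hy.2⟩
  | sUnion S _ ih =>
      rintro y ⟨t, ht, hyt⟩
      exact ⟨t, ht, ih t ht y hyt⟩

theorem stmt6 (R : Type*) [CommRing R] [IsDomain R] (x : {x : R // x ≠ 0}) :
    IsUnit x.1 ↔ @closure _ (maciasTop R) {x} = Set.univ := by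
  letI := maciasTop R
  constructor
  · intro hx
    apply Set.eq_univ_iff_forall.mpr
    intro y
    rw [mem_closure_iff]
    intro o ho hyo
    exact ⟨x, unit_mem_open R x hx ho y hyo, rfl⟩
  · intro h
    have h1 : (⟨1, one_ne_zero⟩ : {x : R // x ≠ 0}) ∈ @closure _ (maciasTop R) {x} := by
      rw [h]; trivial
    have hopen : IsOpen (sigma0 R x.1) :=
      TopologicalSpace.GenerateOpen.basic _ ⟨x.1, x.2, rfl⟩
    have h1mem : (⟨1, one_ne_zero⟩ : {x : R // x ≠ 0}) ∈ sigma0 R x.1 := by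
      simp [sigma0, Ideal.span_singleton_one]
    obtain ⟨z, hz, hz'⟩ := (mem_closure_iff.mp h1) _ hopen h1mem
    rcases hz' with rfl
    have : Ideal.span {z.1} + Ideal.span {z.1} = ⊤ := hz
    rw [← Ideal.span_singleton_eq_top]
    simpa using this
end

section
/- Let R be an integral domain that is not a field, with the Macías topology on R \ {0}. If the Jacobson radical of R is nonzero, then the set of units U(R) is open in this topology; moreover for any nonzero k in the Jacobson radical, σₖ⁰ = U(R). -/
theorem stmt8 (R : Type*) [CommRing R] [IsDomain R] (hnf : ¬ IsField R)
    (hJ : (⊥ : Ideal R).jacobson ≠ ⊥) :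
    @IsOpen _ (maciasTop R) {x : {x : R // x ≠ 0} | IsUnit x.1} ∧
      ∀ k : R, k ∈ (⊥ : Ideal R).jacobson → k ≠ 0 →
        sigma0 R k = {x : {x : R // x ≠ 0} | IsUnit x.1} := by
  have key : ∀ k : R, k ∈ (⊥ : Ideal R).jacobson → k ≠ 0 →
      sigma0 R k = {x : {x : R // x ≠ 0} | IsUnit x.1} := by
    intro k hk hk0
    ext s
    simp only [sigma0, Set.mem_setOf_eq]
    constructor
    · intro h
      have h1 : (1 : R) ∈ Ideal.span {k} + Ideal.span {s.1} := h ▸ Submodule.mem_top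
      rw [Submodule.add_eq_sup, Submodule.mem_sup] at h1
      obtain ⟨a, ha, b, hb, hab⟩ := h1
      rw [Ideal.mem_span_singleton] at ha hb
      obtain ⟨c, rfl⟩ := ha
      obtain ⟨d, rfl⟩ := hb
      have : IsUnit (k * c + 1) := by
        have := Ideal.mem_jacobson_bot.1 hk c
        convert this using 2
      have hbs : IsUnit (s.1 * d) := by
        have : s.1 * d = 1 - k * c := by linear_combination hab
        rw [this]
        have := Ideal.mem_jacobson_bot.1 hk (-c)
        convert this using 1; ring
      exact isUnit_of_mul_isUnit_left hbs
    · intro hs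
      have : Ideal.span {s.1} = ⊤ := Ideal.span_singleton_eq_top.2 hs
      rw [this]
      simp
  refine ⟨?_, key⟩
  obtain ⟨k, hk, hk0⟩ : ∃ k, k ∈ (⊥ : Ideal R).jacobson ∧ k ≠ 0 := by
    by_contra h
    push_neg at h
    exact hJ (le_antisymm (fun x hx => by
      by_contra hx0
      simp only [Ideal.mem_bot] at hx0
      exact hx0 (h x hx)) bot_le)
  rw [← key k hk hk0]
  exact TopologicalSpace.GenerateOpen.basic _ ⟨k, hk0, rfl⟩
end

section
/- Let R be a unique factorization domain that is not a field. If R has only finitely many prime elements up to associates, then the set of units U(R) is open in the Macías topology on R \ {0}. -/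
theorem stmt10 (R : Type*) [CommRing R] [IsDomain R] [UniqueFactorizationMonoid R]
    (hnf : ¬ IsField R)
    (hfin : (Associates.mk '' {p : R | Prime p}).Finite) :
    @IsOpen _ (maciasTop R) {x : {x : R // x ≠ 0} | IsUnit x.1} := by
  classical
  -- choose a representative prime for each associate class
  have hrep : ∀ a ∈ hfin.toFinset, ∃ p : R, Prime p ∧ Associates.mk p = a := by
    intro a ha
    rw [Set.Finite.mem_toFinset] at ha
    obtain ⟨p, hp, rfl⟩ := ha
    exact ⟨p, hp, rfl⟩
  set f : Associates R → R := fun a =>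
    if h : a ∈ hfin.toFinset then (hrep a h).choose else 1 with hf
  have hfprime : ∀ a ∈ hfin.toFinset, Prime (f a) ∧ Associates.mk (f a) = a := by
    intro a ha
    simp only [hf, dif_pos ha]
    exact (hrep a ha).choose_spec
  set k : R := ∏ a ∈ hfin.toFinset, f a with hk
  have hk0 : k ≠ 0 := by
    rw [hk, Finset.prod_ne_zero_iff]
    exact fun a ha => (hfprime a ha).1.ne_zero
  -- every prime divides k
  have hdvd : ∀ p : R, Prime p → p ∣ k := by
    intro p hp
    have hmem : Associates.mk p ∈ hfin.toFinset := by
      rw [Set.Finite.mem_toFinset]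
      exact ⟨p, hp, rfl⟩
    obtain ⟨hpr, heq⟩ := hfprime _ hmem
    have : Associated (f (Associates.mk p)) p := Associates.mk_eq_mk_iff_associated.mp heq
    exact this.symm.dvd.trans (Finset.dvd_prod_of_mem f hmem)
  -- the unit set equals sigma0 R k
  have hset : {x : {x : R // x ≠ 0} | IsUnit x.1} = sigma0 R k := by
    ext s
    simp only [Set.mem_setOf_eq, sigma0]
    rw [Submodule.add_eq_sup, ← Ideal.isCoprime_iff_sup_eq, Ideal.isCoprime_span_singleton_iff]
    constructor
    · rintro ⟨u, hu⟩
      exact ⟨0, (↑u⁻¹ : R), by simp [← hu, mul_comm]⟩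
    · intro hco
      by_contra hs
      obtain ⟨q, hq, hqs⟩ := WfDvdMonoid.exists_irreducible_factor hs s.2
      have hqp : Prime q := UniqueFactorizationMonoid.irreducible_iff_prime.mp hq
      have hqk : q ∣ k := hdvd q hqp
      obtain ⟨a, b, hab⟩ := hco
      have : q ∣ 1 := hab ▸ dvd_add (Dvd.dvd.mul_left hqk a) (Dvd.dvd.mul_left hqs b)
      exact hqp.not_unit (isUnit_of_dvd_one this)
  rw [hset]
  exact TopologicalSpace.GenerateOpen.basic _ ⟨k, hk0, rfl⟩
end

section
/- Let R be a unique factorization domain that is not a field with only finitely many prime elements up to associates. Then the set of prime elements of R is not dense in the Macías topology on R \ {0}: there is a nonzero α such that σ_α⁰ contains no prime element. -/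
theorem stmt11 (R : Type*) [CommRing R] [IsDomain R] [UniqueFactorizationMonoid R]
    (hnf : ¬ IsField R)
    (hfin : (Associates.mk '' {p : R | Prime p}).Finite) :
    ∃ α : R, α ≠ 0 ∧ ∀ s : {x : R // x ≠ 0}, Prime s.1 → s ∉ sigma0 R α := by
  classical
  set T := hfin.toFinset with hT
  refine ⟨∏ a ∈ T, Quotient.out a, ?_, ?_⟩
  · refine Finset.prod_ne_zero_iff.mpr fun a ha => ?_
    rw [hT, Set.Finite.mem_toFinset] at ha
    obtain ⟨p, hp, rfl⟩ := ha
    have hassoc : Associated (Quotient.out (Associates.mk p)) p := by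
      rw [← Associates.mk_eq_mk_iff_associated]
      exact Quotient.out_eq _
    exact (hassoc.symm.prime hp).ne_zero
  · rintro ⟨q, hq0⟩ hq hmem
    have hqT : Associates.mk q ∈ T := by
      rw [hT, Set.Finite.mem_toFinset]; exact ⟨q, hq, rfl⟩
    have hdvd : Quotient.out (Associates.mk q) ∣ ∏ a ∈ T, Quotient.out a :=
      Finset.dvd_prod_of_mem _ hqT
    have hassoc : Associated (Quotient.out (Associates.mk q)) q := by
      rw [← Associates.mk_eq_mk_iff_associated]
      exact Quotient.out_eq _
    have hqdvd : q ∣ ∏ a ∈ T, Quotient.out a := hassoc.symm.dvd.trans hdvd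
    simp only [sigma0, Set.mem_setOf_eq] at hmem
    have hle : Ideal.span {∏ a ∈ T, Quotient.out a} + Ideal.span {q} ≤ Ideal.span {q} := by
      apply sup_le
      · exact Ideal.span_singleton_le_span_singleton.mpr hqdvd
      · exact le_rfl
    rw [hmem] at hle
    have : (1 : R) ∈ Ideal.span {q} := hle (by trivial)
    rw [Ideal.mem_span_singleton] at this
    exact hq.not_unit (isUnit_of_dvd_one this)
end

section
/- Let R be a principal ideal domain and p ∈ R a prime element. In the Macías topology on R \ {0}, the closure of the singleton {p} equals ⟨p⟩ \ {0}, i.e., the set of nonzero multiples of p. -/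
theorem stmt16 (R : Type*) [CommRing R] [IsDomain R] [IsPrincipalIdealRing R]
    (p : R) (hp : Prime p) :
    @closure _ (maciasTop R) {(⟨p, hp.ne_zero⟩ : {x : R // x ≠ 0})} =
      {x : {x : R // x ≠ 0} | p ∣ x.1} := by
  letI := maciasTop R
  ext x
  simp only [Set.mem_setOf_eq]
  rw [mem_closure_iff]
  constructor
  · intro h
    by_contra hdvd
    have hx : x ∈ sigma0 R p := by
      have : IsCoprime p x.1 := (hp.irreducible.coprime_iff_not_dvd).mpr hdvd
      have := (Ideal.isCoprime_span_singleton_iff p x.1).mpr this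
      simpa [sigma0, Ideal.isCoprime_iff_add] using this
    have hopen : IsOpen (sigma0 R p) :=
      TopologicalSpace.GenerateOpen.basic _ ⟨p, hp.ne_zero, rfl⟩
    obtain ⟨y, hy1, hy2⟩ := h _ hopen hx
    rw [Set.mem_singleton_iff] at hy2
    subst hy2
    simp only [sigma0, Set.mem_setOf_eq] at hy1
    rw [Ideal.add_eq_sup, sup_idem, Ideal.span_singleton_eq_top] at hy1
    exact hp.not_unit hy1
  · intro hdvd U hU hxU
    refine ⟨⟨p, hp.ne_zero⟩, ?_, rfl⟩
    induction hU with
    | basic V hV =>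
      obtain ⟨k, hk, rfl⟩ := hV
      simp only [sigma0, Set.mem_setOf_eq] at hxU ⊢
      have hle : Ideal.span {x.1} ≤ Ideal.span ({p} : Set R) :=
        Ideal.span_singleton_le_span_singleton.mpr hdvd
      exact top_le_iff.mp (hxU ▸ add_le_add le_rfl hle)
    | univ => trivial
    | inter V W _ _ ihV ihW => exact ⟨ihV hxU.1, ihW hxU.2⟩
    | sUnion S _ ih =>
      obtain ⟨V, hV, hxV⟩ := hxU
      exact ⟨V, hV, ih V hV hxV⟩
end

section
/- Let R be a principal ideal domain and p₁, …, p_k (k ≥ 2) pairwise non-associate primes. Then the intersection ⋂ᵢ ⟨pᵢ⟩ \ {0} is strictly contained in ⟨p_j⟩ \ {0} for each j. Consequently, the maximal proper singleton closures in the Macías topology on R \ {0} are exactly the sets ⟨p⟩ \ {0} for p prime. -/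
/-- A maximal proper singleton closure in the Macías space of `R`. -/
def MaxProperSingletonClosure (R : Type*) [CommRing R]
    (C : Set {x : R // x ≠ 0}) : Prop :=
  C ≠ Set.univ ∧ (∃ x : {x : R // x ≠ 0}, C = @closure _ (maciasTop R) {x}) ∧
    ∀ D : Set {x : R // x ≠ 0}, D ≠ Set.univ →
      (∃ y : {x : R // x ≠ 0}, D = @closure _ (maciasTop R) {y}) → C ⊆ D → C = D

lemma mem_closure_macias {R : Type*} [CommRing R] [IsDomain R] [IsPrincipalIdealRing R]
    (x y : {x : R // x ≠ 0}) :
    y ∈ @closure _ (maciasTop R) {x} ↔ ∀ q : R, Prime q → q ∣ x.1 → q ∣ y.1 := by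
  letI := maciasTop R
  rw [mem_closure_iff]
  constructor
  · intro h q hq hqx
    by_contra hqy
    have hUopen : IsOpen (sigma0 R q) :=
      TopologicalSpace.GenerateOpen.basic _ ⟨q, hq.ne_zero, rfl⟩
    have hyU : y ∈ sigma0 R q := by
      have hmax : (Ideal.span ({q} : Set R)).IsMaximal :=
        PrincipalIdealRing.isMaximal_of_irreducible hq.irreducible
      by_contra hne
      have h1 : Ideal.span {q} ≤ Ideal.span {q} + Ideal.span {y.1} := le_sup_left
      have heq := hmax.eq_of_le hne h1
      have : y.1 ∈ Ideal.span ({q} : Set R) :=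
        heq ▸ (Ideal.mem_sup_right (Ideal.mem_span_singleton_self _))
      exact hqy (Ideal.mem_span_singleton.mp this)
    obtain ⟨z, hzU, hz⟩ := h _ hUopen hyU
    rw [Set.mem_singleton_iff] at hz; subst hz
    have hle : Ideal.span {q} + Ideal.span {z.1} ≤ Ideal.span ({q} : Set R) := by
      refine sup_le le_rfl ?_
      rw [Ideal.span_singleton_le_span_singleton]
      exact hqx
    have hzU' : Ideal.span {q} + Ideal.span {z.1} = ⊤ := hzU
    rw [hzU'] at hle
    have h1 : (1 : R) ∈ Ideal.span ({q} : Set R) := hle trivial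
    exact hq.not_unit (isUnit_of_dvd_one (Ideal.mem_span_singleton.mp h1))
  · intro h U hU hyU
    refine ⟨x, ?_, rfl⟩
    revert hyU
    induction hU with
    | basic V hV =>
      obtain ⟨k, hk0, rfl⟩ := hV
      intro hyV
      by_contra hxV
      obtain ⟨M, hM, hle⟩ := Ideal.exists_le_maximal _ hxV
      obtain ⟨a, ha⟩ := (IsPrincipalIdealRing.principal M).principal
      rw [Ideal.submodule_span_eq] at ha
      have hak : a ∣ k := by
        have : k ∈ M := hle (Ideal.mem_sup_left (Ideal.mem_span_singleton_self _))
        rw [ha] at this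
        exact Ideal.mem_span_singleton.mp this
      have hax : a ∣ x.1 := by
        have : x.1 ∈ M := hle (Ideal.mem_sup_right (Ideal.mem_span_singleton_self _))
        rw [ha] at this
        exact Ideal.mem_span_singleton.mp this
      have ha0 : a ≠ 0 := by
        rintro rfl
        exact hk0 (zero_dvd_iff.mp hak)
      have hap : Prime a := by
        rw [← Ideal.span_singleton_prime ha0, ← ha]
        exact hM.isPrime
      have hay : a ∣ y.1 := h a hap hax
      have : Ideal.span {k} + Ideal.span {y.1} ≤ Ideal.span ({a} : Set R) := by
        refine sup_le ?_ ?_ <;> rw [Ideal.span_singleton_le_span_singleton] <;> assumption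
      rw [hyV] at this
      have h1 : (1 : R) ∈ Ideal.span ({a} : Set R) := this trivial
      exact hap.not_unit (isUnit_of_dvd_one (Ideal.mem_span_singleton.mp h1))
    | univ => intro _; trivial
    | inter U V _ _ ihU ihV => intro hy; exact ⟨ihU hy.1, ihV hy.2⟩
    | sUnion S _ ih =>
      rintro ⟨V, hVS, hyV⟩
      exact ⟨V, hVS, ih V hVS hyV⟩

lemma closure_prime_macias {R : Type*} [CommRing R] [IsDomain R] [IsPrincipalIdealRing R]
    {q : R} (hq : Prime q) :
    @closure _ (maciasTop R) {(⟨q, hq.ne_zero⟩ : {x : R // x ≠ 0})} =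
      {y : {x : R // x ≠ 0} | q ∣ y.1} := by
  ext y
  rw [mem_closure_macias]
  constructor
  · intro h; exact h q hq dvd_rfl
  · intro h r _ hrq; exact hrq.trans h

lemma closure_unit_macias {R : Type*} [CommRing R] [IsDomain R] [IsPrincipalIdealRing R]
    {x : {x : R // x ≠ 0}} (hx : IsUnit x.1) :
    @closure _ (maciasTop R) {x} = Set.univ := by
  ext y
  simp only [Set.mem_univ, iff_true, mem_closure_macias]
  intro r hr hrx
  exact absurd (isUnit_of_dvd_unit hrx hx) hr.not_unit

theorem stmt18 (R : Type*) [CommRing R] [IsDomain R] [IsPrincipalIdealRing R]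
    (hnf : ¬ IsField R) :
    (∀ (n : ℕ), 2 ≤ n → ∀ p : Fin n → R, (∀ i, Prime (p i)) →
      (∀ i j, i ≠ j → ¬ Associated (p i) (p j)) →
      ∀ j : Fin n,
        (⋂ i, {y : {x : R // x ≠ 0} | p i ∣ y.1}) ⊂ {y : {x : R // x ≠ 0} | p j ∣ y.1}) ∧
    (∀ C : Set {x : R // x ≠ 0},
      MaxProperSingletonClosure R C ↔
        ∃ q : R, Prime q ∧ C = {y : {x : R // x ≠ 0} | q ∣ y.1}) := by
  constructor
  · intro n hn p hp hassoc j
    constructor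
    · intro y hy
      exact Set.mem_iInter.mp hy j
    · intro hsub
      have : Nontrivial (Fin n) := Fin.nontrivial_iff_two_le.mpr hn
      obtain ⟨i, hij⟩ := exists_ne j
      have hmem : (⟨p j, (hp j).ne_zero⟩ : {x : R // x ≠ 0}) ∈
          {y : {x : R // x ≠ 0} | p j ∣ y.1} := dvd_rfl
      have := Set.mem_iInter.mp (hsub hmem) i
      exact hassoc i j hij ((hp i).associated_of_dvd (hp j) this)
  · intro C
    constructor
    · rintro ⟨hne, ⟨x, rfl⟩, hmax⟩
      have hxu : ¬ IsUnit x.1 := fun hu => hne (closure_unit_macias hu)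
      obtain ⟨a, ha, hax⟩ := WfDvdMonoid.exists_irreducible_factor hxu x.2
      have hap : Prime a := ha.prime
      refine ⟨a, hap, ?_⟩
      refine hmax _ ?_ ⟨⟨a, hap.ne_zero⟩, (closure_prime_macias hap).symm⟩ ?_
      · intro h
        have : (⟨1, one_ne_zero⟩ : {x : R // x ≠ 0}) ∈
            {y : {x : R // x ≠ 0} | a ∣ y.1} := h ▸ Set.mem_univ _
        exact hap.not_unit (isUnit_of_dvd_one this)
      · intro y hy
        exact (mem_closure_macias x y).mp hy a hap hax
    · rintro ⟨q, hq, rfl⟩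
      refine ⟨?_, ⟨⟨q, hq.ne_zero⟩, (closure_prime_macias hq).symm⟩, ?_⟩
      · intro h
        have : (⟨1, one_ne_zero⟩ : {x : R // x ≠ 0}) ∈
            {y : {x : R // x ≠ 0} | q ∣ y.1} := h ▸ Set.mem_univ _
        exact hq.not_unit (isUnit_of_dvd_one this)
      · rintro D hDne ⟨y, rfl⟩ hCD
        have hyu : ¬ IsUnit y.1 := fun hu => hDne (closure_unit_macias hu)
        obtain ⟨a, ha, hay⟩ := WfDvdMonoid.exists_irreducible_factor hyu y.2
        have hap : Prime a := ha.prime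
        have hqC : (⟨q, hq.ne_zero⟩ : {x : R // x ≠ 0}) ∈
            {y : {x : R // x ≠ 0} | q ∣ y.1} := dvd_rfl
        have haq : a ∣ q :=
          (mem_closure_macias y _).mp (hCD hqC) a hap hay
        have hassoc : Associated a q := hap.associated_of_dvd hq haq
        refine Set.Subset.antisymm hCD ?_
        intro z hz
        have haz : a ∣ z.1 := (mem_closure_macias y z).mp hz a hap hay
        exact hassoc.symm.dvd.trans haz
end

section
/- Let R and S be infinite principal ideal domains that are not fields. The Macías spaces M(R) and M(S) are homeomorphic if and only if |U(R)| = |U(S)| and the sets of associate classes of prime elements of R and S have the same cardinality. -/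
/-!
In a principal ideal domain, `s ∈ σₖ⁰` iff no prime divides both `k` and `s`. Hence `x ⤳ y` in
`M(R)` iff every prime dividing `x` divides `y`: the specialization preorder, which every
homeomorphism preserves, is inclusion of prime supports. The units are then the generic points,
and the points of height one (non-generic, with only generic or inseparable generizations) are
those whose prime support is a single class; two of them are inseparable iff they share it.

Conversely, a bijection between prime classes extends, by unique factorization, to an order
isomorphism between the divisibility orders of `Associates R` and `Associates S`. Combined with a
bijection of units through `x = (representative of [x]) * u`, it gives a bijection
`R \ {0} ≃ S \ {0}` preserving coprimality, hence the basic open sets in both directions.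
-/

open Set Topology Filter TopologicalSpace

section HeightOne

variable {X Y : Type*} [TopologicalSpace X] [TopologicalSpace Y]

def IsHeightOnePoint (x : X) : Prop :=
  ¬ IsGenericPoint x univ ∧ ∀ y, y ⤳ x → IsGenericPoint y univ ∨ x ⤳ y

theorem Homeomorph.isGenericPoint_univ_iff (h : X ≃ₜ Y) {x : X} :
    IsGenericPoint (h x) univ ↔ IsGenericPoint x univ := by
  simp only [isGenericPoint_iff_specializes, mem_univ, iff_true, h.surjective.forall,
    h.isInducing.specializes_iff]

theorem Homeomorph.isHeightOnePoint_iff (h : X ≃ₜ Y) {x : X} :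
    IsHeightOnePoint (h x) ↔ IsHeightOnePoint x := by
  simp only [IsHeightOnePoint, h.surjective.forall, h.isGenericPoint_univ_iff,
    h.isInducing.specializes_iff]

end HeightOne

section PrimeSupport

variable {M : Type*} [CommMonoidWithZero M]

def primeSupport (x : M) : Set (Associates M) :=
  {P | Prime P ∧ P ∣ Associates.mk x}

theorem mk_mem_primeSupport {p x : M} :
    Associates.mk p ∈ primeSupport x ↔ Prime p ∧ p ∣ x := by
  rw [primeSupport, mem_ofPred_eq, Associates.prime_mk, Associates.mk_dvd_mk]

theorem primeSupport_of_prime [IsCancelMulZero M] {p : M} (hp : Prime p) :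
    primeSupport p = {Associates.mk p} := by
  ext P
  refine ⟨fun ⟨hP, hPp⟩ => ?_, fun hP => ?_⟩
  · exact associated_iff_eq.mp (hP.associated_of_dvd (Associates.prime_mk.mpr hp) hPp)
  · rw [mem_singleton_iff.mp hP]
    exact ⟨Associates.prime_mk.mpr hp, dvd_rfl⟩

theorem exists_primeSupport_eq_singleton [IsCancelMulZero M] {P : Associates M}
    (hP : Prime P) : ∃ x : {x : M // x ≠ 0}, primeSupport x.1 = {P} := by
  obtain ⟨p, rfl⟩ := Associates.exists_rep P
  have hp := Associates.prime_mk.mp hP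
  exact ⟨⟨p, hp.ne_zero⟩, primeSupport_of_prime hp⟩

theorem primeSupport_eq_empty_iff [UniqueFactorizationMonoid M] {x : M} (hx : x ≠ 0) :
    primeSupport x = ∅ ↔ IsUnit x := by
  refine ⟨fun h => not_not.mp fun hu => ?_, fun hu => eq_empty_of_forall_notMem fun P hP => ?_⟩
  · obtain ⟨p, hp, hpx⟩ := WfDvdMonoid.exists_irreducible_factor hu hx
    exact (eq_empty_iff_forall_notMem.mp h) _ (mk_mem_primeSupport.mpr ⟨hp.prime, hpx⟩)
  · exact hP.1.not_isUnit (isUnit_of_dvd_unit hP.2 (Associates.isUnit_mk.mpr hu))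

end PrimeSupport

def Multiset.mapOrderIso {α β : Type*} (e : α ≃ β) : Multiset α ≃o Multiset β where
  toFun := map e
  invFun := map e.symm
  left_inv s := by simp only [map_map, Function.comp_def, Equiv.symm_apply_apply, map_id']
  right_inv s := by simp only [map_map, Function.comp_def, Equiv.apply_symm_apply, map_id']
  map_rel_iff' := map_le_map_iff e.injective

namespace Associates

variable {M N : Type*} [CommMonoidWithZero M] [CommMonoidWithZero N]

theorem image_mk_setOf_prime : Associates.mk '' {p : M | Prime p} = {P | Prime P} := by
  ext P
  refine ⟨?_, fun hP => ?_⟩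
  · rintro ⟨p, hp, rfl⟩
    exact prime_mk.mpr hp
  · obtain ⟨p, rfl⟩ := exists_rep P
    exact ⟨p, prime_mk.mp hP, rfl⟩

theorem mk_quot_out_mul_units (a : Associates M) (u : Mˣ) : Associates.mk (Quot.out a * u) = a :=
  (mk_eq_mk_iff_associated.mpr (associated_mul_unit_left _ _ u.isUnit)).trans (quot_out a)

theorem quot_out_ne_zero {a : Associates M} (ha : a ≠ 0) : Quot.out a ≠ 0 :=
  mk_ne_zero.mp (by rwa [quot_out])

theorem orderIso_apply_eq_zero_iff [IsCancelMulZero N] (E : Associates M ≃o Associates N)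
    {a : Associates M} : E a = 0 ↔ a = 0 :=
  map_eq_top_iff E

theorem isRelPrime_map_orderIso [IsCancelMulZero N] (E : Associates M ≃o Associates N)
    {a b : Associates M} : IsRelPrime (E a) (E b) ↔ IsRelPrime a b := by
  simp only [IsRelPrime, E.surjective.forall]
  have hE1 : E 1 = 1 := by simpa only [bot_eq_one] using E.map_bot
  refine forall_congr' fun d => ?_
  rw [isUnit_iff_eq_one, isUnit_iff_eq_one, ← hE1, E.injective.eq_iff]
  exact imp_congr E.le_iff_le (imp_congr E.le_iff_le Iff.rfl)

variable [UniqueFactorizationMonoid M] [Nontrivial M] [UniqueFactorizationMonoid N]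
  [Nontrivial N]

noncomputable def factorsOrderIso : Associates M ≃o FactorSet M where
  toFun := factors
  invFun := FactorSet.prod
  left_inv := factors_prod
  right_inv := prod_factors
  map_rel_iff' := factors_le

def irreducibleEquivPrime (L : Type*) [CommMonoidWithZero L] [UniqueFactorizationMonoid L] :
    {a : Associates L // Irreducible a} ≃ {P : Associates L | Prime P} :=
  Equiv.subtypeEquivRight fun _ => associates_irreducible_iff_prime

noncomputable def orderIsoOfPrimesEquiv
    (e : {P : Associates M | Prime P} ≃ {Q : Associates N | Prime Q}) :
    Associates M ≃o Associates N :=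
  factorsOrderIso.trans <|
    (Multiset.mapOrderIso ((irreducibleEquivPrime M).trans
      (e.trans (irreducibleEquivPrime N).symm))).withTopCongr.trans factorsOrderIso.symm

end Associates

section UnitDecomposition

variable {M : Type*} [CommMonoidWithZero M]

noncomputable def outMkUnit (x : M) : Mˣ :=
  (Associates.mk_eq_mk_iff_associated.mp (Associates.quot_out (Associates.mk x))).choose

theorem quot_out_mk_mul_outMkUnit (x : M) : Quot.out (Associates.mk x) * outMkUnit x = x :=
  (Associates.mk_eq_mk_iff_associated.mp (Associates.quot_out (Associates.mk x))).choose_spec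

noncomputable def nonzeroEquivUnitsProd [IsCancelMulZero M] :
    {x : M // x ≠ 0} ≃ Mˣ × {a : Associates M // a ≠ 0} where
  toFun x := (outMkUnit x.1, ⟨Associates.mk x.1, Associates.mk_ne_zero.mpr x.2⟩)
  invFun p := ⟨Quot.out p.2.1 * p.1,
    (Units.mul_left_eq_zero _).not.mpr (Associates.quot_out_ne_zero p.2.2)⟩
  left_inv x := Subtype.ext (quot_out_mk_mul_outMkUnit x.1)
  right_inv := by
    rintro ⟨u, a, ha⟩
    have hunit : outMkUnit (Quot.out a * u) = u := by
      refine Units.ext (mul_left_cancel₀ (Associates.quot_out_ne_zero ha) ?_)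
      simpa only [Associates.mk_quot_out_mul_units] using
        quot_out_mk_mul_outMkUnit (Quot.out a * u)
    exact Prod.ext hunit (Subtype.ext (Associates.mk_quot_out_mul_units a u))

theorem mk_nonzeroEquivUnitsProd_symm [IsCancelMulZero M]
    (p : Mˣ × {a : Associates M // a ≠ 0}) :
    Associates.mk (nonzeroEquivUnitsProd.symm p).1 = p.2.1 :=
  Associates.mk_quot_out_mul_units p.2.1 p.1

end UnitDecomposition

namespace Macias

attribute [local instance] maciasTop

section CommRing

variable {A : Type*} [CommRing A]

theorem mem_sigma0_iff_isCoprime {k : A} {x : {x : A // x ≠ 0}} :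
    x ∈ sigma0 A k ↔ IsCoprime k x.1 := by
  rw [sigma0, mem_ofPred_eq, Ideal.add_eq_sup, ← Ideal.isCoprime_iff_sup_eq,
    Ideal.isCoprime_span_singleton_iff]

theorem mem_sigma0_iff_isRelPrime [IsBezout A] {k : A} {x : {x : A // x ≠ 0}} :
    x ∈ sigma0 A k ↔ IsRelPrime (Associates.mk k) (Associates.mk x.1) := by
  rw [mem_sigma0_iff_isCoprime, Associates.mk_isRelPrime_iff, isRelPrime_iff_isCoprime]

theorem isOpen_sigma0 {k : A} (hk : k ≠ 0) : IsOpen (sigma0 A k) :=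
  isOpen_generateFrom_of_mem ⟨k, hk, rfl⟩

theorem specializes_iff_forall_mem_sigma0 {x y : {x : A // x ≠ 0}} :
    x ⤳ y ↔ ∀ k ≠ 0, y ∈ sigma0 A k → x ∈ sigma0 A k := by
  refine ⟨fun h k hk hy => h.mem_open (isOpen_sigma0 hk) hy, fun H => ?_⟩
  show 𝓝 x ≤ @nhds _ (generateFrom _) y
  rw [nhds_generateFrom]
  refine le_iInf₂ fun U ⟨hyU, k, hk, hU⟩ => le_principal_iff.mpr ?_
  subst hU
  exact (isOpen_sigma0 hk).mem_nhds (H k hk hyU)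

end CommRing

variable {A B : Type*} [CommRing A] [IsDomain A] [IsPrincipalIdealRing A]
  [CommRing B] [IsDomain B] [IsPrincipalIdealRing B]

theorem specializes_iff_primeSupport_subset {x y : {x : A // x ≠ 0}} :
    x ⤳ y ↔ primeSupport x.1 ⊆ primeSupport y.1 := by
  simp only [specializes_iff_forall_mem_sigma0, mem_sigma0_iff_isCoprime]
  constructor
  · intro H P hP
    obtain ⟨p, rfl⟩ := Associates.exists_rep P
    obtain ⟨hp, hpx⟩ := mk_mem_primeSupport.mp hP
    refine mk_mem_primeSupport.mpr ⟨hp, not_not.mp fun hpy => ?_⟩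
    exact hp.coprime_iff_not_dvd.mp (H p hp.ne_zero (hp.coprime_iff_not_dvd.mpr hpy)) hpx
  · intro H k hk hky
    refine isCoprime_of_prime_dvd (fun h => hk h.1) fun p hp hpk hpx => hp.not_isUnit ?_
    exact hky.isUnit_of_dvd' hpk (mk_mem_primeSupport.mp (H (mk_mem_primeSupport.mpr ⟨hp, hpx⟩))).2

theorem inseparable_iff_primeSupport_eq {x y : {x : A // x ≠ 0}} :
    Inseparable x y ↔ primeSupport x.1 = primeSupport y.1 := by
  simp only [inseparable_iff_specializes_and, specializes_iff_primeSupport_subset,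
    subset_antisymm_iff]

theorem isGenericPoint_univ_iff {x : {x : A // x ≠ 0}} :
    IsGenericPoint x univ ↔ primeSupport x.1 = ∅ := by
  simp only [isGenericPoint_iff_specializes, mem_univ, iff_true,
    specializes_iff_primeSupport_subset]
  refine ⟨fun h => subset_empty_iff.mp ?_, fun h y => h ▸ empty_subset _⟩
  exact (h ⟨1, one_ne_zero⟩).trans ((primeSupport_eq_empty_iff one_ne_zero).mpr isUnit_one).subset

theorem isHeightOnePoint_iff {x : {x : A // x ≠ 0}} :
    IsHeightOnePoint x ↔ ∃ P, primeSupport x.1 = {P} := by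
  simp only [IsHeightOnePoint, isGenericPoint_univ_iff, specializes_iff_primeSupport_subset]
  constructor
  · rintro ⟨hne, H⟩
    obtain ⟨P, hP⟩ := nonempty_iff_ne_empty.mpr hne
    obtain ⟨y, hy⟩ := exists_primeSupport_eq_singleton hP.1
    refine ⟨P, subset_antisymm ?_ (singleton_subset_iff.mpr hP)⟩
    rcases H y (hy ▸ singleton_subset_iff.mpr hP) with h | h
    · exact absurd h (hy ▸ singleton_ne_empty P)
    · exact hy ▸ h
  · rintro ⟨P, hP⟩
    refine ⟨hP ▸ singleton_ne_empty P, fun y hy => ?_⟩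
    rw [hP] at hy ⊢
    exact (subset_singleton_iff_eq.mp hy).imp id fun h => h.symm.subset

noncomputable def unitsEquivGenericPoints :
    Aˣ ≃ {x : {x : A // x ≠ 0} // IsGenericPoint x univ} where
  toFun u := ⟨⟨u, u.ne_zero⟩, isGenericPoint_univ_iff.mpr
    ((primeSupport_eq_empty_iff u.ne_zero).mpr u.isUnit)⟩
  invFun x := ((primeSupport_eq_empty_iff x.1.2).mp (isGenericPoint_univ_iff.mp x.2)).unit
  left_inv _ := Units.ext rfl
  right_inv _ := rfl

noncomputable def unitsEquivOfHomeomorph (h : {x : A // x ≠ 0} ≃ₜ {x : B // x ≠ 0}) :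
    Aˣ ≃ Bˣ :=
  unitsEquivGenericPoints.trans <|
    (h.toEquiv.subtypeEquiv fun _ => h.isGenericPoint_univ_iff.symm).trans
      unitsEquivGenericPoints.symm

theorem range_primeSupport_heightOnePoints :
    range (fun x : {x : {x : A // x ≠ 0} // IsHeightOnePoint x} => primeSupport x.1.1) =
      range (fun P : {P : Associates A | Prime P} => ({P.1} : Set (Associates A))) := by
  ext s
  constructor
  · rintro ⟨x, rfl⟩
    obtain ⟨P, hP⟩ := isHeightOnePoint_iff.mp x.2
    exact ⟨⟨P, (hP ▸ mem_singleton P : P ∈ primeSupport x.1.1).1⟩, hP.symm⟩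
  · rintro ⟨P, rfl⟩
    obtain ⟨x, hx⟩ := exists_primeSupport_eq_singleton P.2
    exact ⟨⟨x, isHeightOnePoint_iff.mpr ⟨P, hx⟩⟩, hx⟩

noncomputable def primesEquivQuotient :
    {P : Associates A | Prime P} ≃
      Quotient (Setoid.ker fun x : {x : {x : A // x ≠ 0} // IsHeightOnePoint x} =>
        primeSupport x.1.1) :=
  (Equiv.ofInjective _ (singleton_injective.comp Subtype.val_injective)).trans <|
    (Equiv.setCongr range_primeSupport_heightOnePoints.symm).trans
      (Setoid.quotientKerEquivRange _).symm

noncomputable def primesEquivOfHomeomorph (h : {x : A // x ≠ 0} ≃ₜ {x : B // x ≠ 0}) :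
    {P : Associates A | Prime P} ≃ {Q : Associates B | Prime Q} :=
  primesEquivQuotient.trans <|
    (Quotient.congr (h.toEquiv.subtypeEquiv fun _ => h.isHeightOnePoint_iff.symm)
      fun x y => by
        simp only [Setoid.ker_def, ← inseparable_iff_primeSupport_eq]
        exact h.isInducing.inseparable_iff.symm).trans
      primesEquivQuotient.symm

theorem continuous_of_mk_eq (E : Associates A ≃o Associates B)
    {f : {x : A // x ≠ 0} → {x : B // x ≠ 0}}
    (hf : ∀ x, Associates.mk (f x).1 = E (Associates.mk x.1)) : Continuous f := by
  refine continuous_generateFrom_iff.mpr ?_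
  rintro _ ⟨k', hk', rfl⟩
  obtain ⟨k, hk⟩ := Associates.exists_rep (E.symm (Associates.mk k'))
  have hk0 : k ≠ 0 := by
    rintro rfl
    rw [Associates.mk_zero, eq_comm, Associates.orderIso_apply_eq_zero_iff,
      Associates.mk_eq_zero] at hk
    exact hk' hk
  convert isOpen_sigma0 hk0 using 1
  ext x
  rw [mem_preimage, mem_sigma0_iff_isRelPrime, mem_sigma0_iff_isRelPrime, hf, hk,
    ← Associates.isRelPrime_map_orderIso E, E.apply_symm_apply]

noncomputable def homeomorphOfEquiv (eU : Aˣ ≃ Bˣ) (E : Associates A ≃o Associates B) :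
    {x : A // x ≠ 0} ≃ₜ {x : B // x ≠ 0} where
  toEquiv := nonzeroEquivUnitsProd.trans <|
    (eU.prodCongr (E.toEquiv.subtypeEquiv fun _ =>
      (Associates.orderIso_apply_eq_zero_iff E).not.symm)).trans nonzeroEquivUnitsProd.symm
  continuous_toFun := continuous_of_mk_eq E fun _ => mk_nonzeroEquivUnitsProd_symm _
  continuous_invFun := continuous_of_mk_eq E.symm fun _ => mk_nonzeroEquivUnitsProd_symm _

end Macias

theorem stmt19_general (R S : Type*) [CommRing R] [IsDomain R] [IsPrincipalIdealRing R]
    [CommRing S] [IsDomain S] [IsPrincipalIdealRing S] :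
    Nonempty (@Homeomorph {x : R // x ≠ 0} {x : S // x ≠ 0} (maciasTop R) (maciasTop S)) ↔
      (Nonempty (Rˣ ≃ Sˣ) ∧
        Nonempty ((Associates.mk '' {p : R | Prime p}) ≃
          (Associates.mk '' {p : S | Prime p}))) := by
  rw [Associates.image_mk_setOf_prime, Associates.image_mk_setOf_prime]
  constructor
  · rintro ⟨h⟩
    exact ⟨⟨Macias.unitsEquivOfHomeomorph h⟩, ⟨Macias.primesEquivOfHomeomorph h⟩⟩
  · rintro ⟨⟨eU⟩, ⟨eP⟩⟩
    exact ⟨Macias.homeomorphOfEquiv eU (Associates.orderIsoOfPrimesEquiv eP)⟩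

theorem stmt19 (R S : Type*) [CommRing R] [IsDomain R] [IsPrincipalIdealRing R]
    [CommRing S] [IsDomain S] [IsPrincipalIdealRing S]
    [Infinite R] [Infinite S] (hR : ¬ IsField R) (hS : ¬ IsField S) :
    Nonempty (@Homeomorph {x : R // x ≠ 0} {x : S // x ≠ 0} (maciasTop R) (maciasTop S)) ↔
      (Nonempty (Rˣ ≃ Sˣ) ∧
        Nonempty ((Associates.mk '' {p : R | Prime p}) ≃
          (Associates.mk '' {p : S | Prime p}))) :=
  stmt19_general R S
end
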